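/- With the notation of the CEV scale data, the function ψ is twice differentiable on (0,1), satisfies the degenerate ODE μ x ψ'(x) + (1/2) σ² x^{2p} ψ''(x) = −1 for every x ∈ (0,1), and satisfies the boundary conditions ψ(1) = 0 and lim_{x↓0} ψ(x) = 0. -/

import Mathlib

open MeasureTheory Set intervalIntegral

/-- The scale density `s(x) = exp(−(2μ/(σ²(2−2p))) x^{2−2p})` of the CEV diffusion. -/
noncomputable def sDen (μ σ p : ℝ) (x : ℝ) : ℝ :=
  Real.exp (-(2 * μ / (σ ^ 2 * (2 - 2 * p))) * x ^ (2 - 2 * p))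

/-- The scale function `S(x) = ∫₀ˣ s(z) dz` of the CEV diffusion. -/
noncomputable def Sfun (μ σ p : ℝ) (x : ℝ) : ℝ := ∫ z in (0 : ℝ)..x, sDen μ σ p z

/-- The speed density `m(y) = 1/(σ² y^{2p} s(y))` of the CEV diffusion. -/
noncomputable def mDen (μ σ p : ℝ) (y : ℝ) : ℝ := 1 / (σ ^ 2 * y ^ (2 * p) * sDen μ σ p y)

/-- `φ(x) = S(x)/S(1)`, the probability that the CEV diffusion started at `x` reaches
`1` before `0`. -/
noncomputable def phiFun (μ σ p : ℝ) (x : ℝ) : ℝ := Sfun μ σ p x / Sfun μ σ p 1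

/-- `ψ(x) = 2 φ(x) ∫ₓ¹ (S(1) − S(y)) m(y) dy + 2 (1 − φ(x)) ∫₀ˣ S(y) m(y) dy`, the expectation
of the exit time of the CEV diffusion from `(0,1)` started at `x`. -/
noncomputable def psiFun (μ σ p : ℝ) (x : ℝ) : ℝ :=
  2 * phiFun μ σ p x * (∫ y in x..(1 : ℝ), (Sfun μ σ p 1 - Sfun μ σ p y) * mDen μ σ p y)
    + 2 * (1 - phiFun μ σ p x) * (∫ y in (0 : ℝ)..x, Sfun μ σ p y * mDen μ σ p y)

/-!
Write `G(x) = ∫ₓ¹ (S(1) − S) m` and `H(x) = ∫₀ˣ S m`, so that `ψ = 2 φ G + 2 (1 − φ) H`.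
Since `φ (S(1) − S) = (1 − φ) S`, the terms of `ψ'` containing `m` cancel and
`ψ' = 2 s (G − H) / S(1)`. Differentiating again, `s'/s = −2μ x^{1−2p}/σ²` and
`s m = 1/(σ² x^{2p})`, which is exactly what makes `μ x ψ' + ½ σ² x^{2p} ψ'' = −1`.
At `1`, `φ(1) = 1` and `G(1) = 0`. Near `0`, `S m = O(y^{1−2p})` is integrable, so `H → 0`,
and `φ(x) = O(x)` while `G(x) = O(x^{1−2p} log(1/x))` because `y^{−2p} ≤ x^{1−2p}/y` for
`x ≤ y`, so `φ G → 0`.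
-/

open Filter Topology

section GreenFunction

variable {S G H : ℝ → ℝ} {c m x : ℝ}

theorem hasDerivAt_green_combination {s : ℝ} (hc : c ≠ 0) (hS : HasDerivAt S s x)
    (hG : HasDerivAt G (-((c - S x) * m)) x) (hH : HasDerivAt H (S x * m) x) :
    HasDerivAt (fun y => 2 * (S y / c) * G y + 2 * (1 - S y / c) * H y)
      (2 * s / c * (G x - H x)) x := by
  refine ((((hS.div_const c).const_mul 2).fun_mul hG).add
    ((((hS.div_const c).const_sub 1).const_mul 2).fun_mul hH)).congr_deriv ?_
  field_simp
  ring

theorem hasDerivAt_green_combination_deriv {s : ℝ → ℝ} {s' : ℝ} (hc : c ≠ 0)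
    (hs : HasDerivAt s s' x) (hG : HasDerivAt G (-((c - S x) * m)) x)
    (hH : HasDerivAt H (S x * m) x) :
    HasDerivAt (fun y => 2 * s y / c * (G y - H y))
      (2 * s' / c * (G x - H x) - 2 * s x * m) x := by
  refine (((hs.const_mul 2).div_const c).fun_mul (hG.fun_sub hH)).congr_deriv ?_
  field_simp
  ring

end GreenFunction

theorem ContinuousOn.intervalIntegrable_of_Ioi {E : Type*} [NormedAddCommGroup E] {f : ℝ → E}
    {a b c : ℝ} (hf : ContinuousOn f (Ioi c)) (ha : c < a) (hb : c < b) :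
    IntervalIntegrable f volume a b :=
  (hf.mono fun _ hy => (lt_min ha hb).trans_le hy.1).intervalIntegrable

namespace CEV

variable {μ σ p x : ℝ}

noncomputable def scaleBound (μ σ p : ℝ) : ℝ := Real.exp |2 * μ / (σ ^ 2 * (2 - 2 * p))|

lemma scaleBound_pos : 0 < scaleBound μ σ p := Real.exp_pos _

lemma sDen_pos (x : ℝ) : 0 < sDen μ σ p x := Real.exp_pos _

lemma continuous_sDen (hp1 : p < 1) : Continuous (sDen μ σ p) :=
  Real.continuous_exp.comp (continuous_const.mul (Real.continuous_rpow_const (by linarith)))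

lemma hasDerivAt_sDen (hσ : σ ≠ 0) (hp1 : p < 1) (hx : 0 < x) :
    HasDerivAt (sDen μ σ p) (-(2 * μ / σ ^ 2) * x ^ (1 - 2 * p) * sDen μ σ p x) x := by
  refine (((Real.hasDerivAt_rpow_const (p := 2 - 2 * p) (Or.inl hx.ne')).const_mul
    (-(2 * μ / (σ ^ 2 * (2 - 2 * p))))).exp).congr_deriv ?_
  have : 1 - p ≠ 0 := by linarith
  rw [show 2 - 2 * p - 1 = 1 - 2 * p by ring, sDen]
  field_simp

lemma abs_log_sDen_le (hp1 : p < 1) (hx : x ∈ Icc (0 : ℝ) 1) :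
    |Real.log (sDen μ σ p x)| ≤ |2 * μ / (σ ^ 2 * (2 - 2 * p))| := by
  rw [sDen, Real.log_exp, abs_mul, abs_neg, abs_of_nonneg (Real.rpow_nonneg hx.1 _)]
  exact mul_le_of_le_one_right (abs_nonneg _) (Real.rpow_le_one hx.1 hx.2 (by linarith))

lemma sDen_le_scaleBound (hp1 : p < 1) (hx : x ∈ Icc (0 : ℝ) 1) :
    sDen μ σ p x ≤ scaleBound μ σ p := by
  rw [scaleBound, ← Real.exp_log (sDen_pos x)]
  exact Real.exp_le_exp.2 (abs_le.1 (abs_log_sDen_le hp1 hx)).2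

lemma inv_scaleBound_le_sDen (hp1 : p < 1) (hx : x ∈ Icc (0 : ℝ) 1) :
    (scaleBound μ σ p)⁻¹ ≤ sDen μ σ p x := by
  rw [scaleBound, ← Real.exp_neg, ← Real.exp_log (sDen_pos x)]
  exact Real.exp_le_exp.2 (abs_le.1 (abs_log_sDen_le hp1 hx)).1

lemma hasDerivAt_Sfun (hp1 : p < 1) (x : ℝ) : HasDerivAt (Sfun μ σ p) (sDen μ σ p x) x :=
  intervalIntegral.integral_hasDerivAt_right ((continuous_sDen hp1).intervalIntegrable _ _)
    ((continuous_sDen hp1).stronglyMeasurableAtFilter _ _) (continuous_sDen hp1).continuousAt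

lemma continuous_Sfun (hp1 : p < 1) : Continuous (Sfun μ σ p) :=
  continuous_iff_continuousAt.2 fun x => (hasDerivAt_Sfun hp1 x).continuousAt

lemma strictMono_Sfun (hp1 : p < 1) : StrictMono (Sfun μ σ p) :=
  strictMono_of_hasDerivAt_pos (hasDerivAt_Sfun hp1) sDen_pos

lemma Sfun_zero : Sfun μ σ p 0 = 0 := intervalIntegral.integral_same

lemma Sfun_pos (hp1 : p < 1) (hx : 0 < x) : 0 < Sfun μ σ p x :=
  Sfun_zero (μ := μ) (σ := σ) (p := p) ▸ strictMono_Sfun hp1 hx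

lemma Sfun_nonneg (hp1 : p < 1) (hx : 0 ≤ x) : 0 ≤ Sfun μ σ p x :=
  Sfun_zero (μ := μ) (σ := σ) (p := p) ▸ (strictMono_Sfun hp1).monotone hx

lemma Sfun_le (hp1 : p < 1) (hx : x ∈ Icc (0 : ℝ) 1) : Sfun μ σ p x ≤ scaleBound μ σ p * x := by
  have := intervalIntegral.integral_mono_on hx.1 ((continuous_sDen hp1).intervalIntegrable 0 x)
    (_root_.intervalIntegrable_const (μ := volume) (c := scaleBound μ σ p))
    fun y hy => sDen_le_scaleBound (μ := μ) (σ := σ) hp1 ⟨hy.1, hy.2.trans hx.2⟩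
  simpa [Sfun, mul_comm] using this

lemma mDen_pos (hσ : σ ≠ 0) (hx : 0 < x) : 0 < mDen μ σ p x := by
  have := Real.rpow_pos_of_pos hx (2 * p)
  have := sDen_pos (μ := μ) (σ := σ) (p := p) x
  rw [mDen]
  positivity

lemma continuousOn_mDen (hσ : σ ≠ 0) (hp1 : p < 1) : ContinuousOn (mDen μ σ p) (Ioi 0) := by
  intro y hy
  have := Real.rpow_pos_of_pos hy (2 * p)
  have := sDen_pos (μ := μ) (σ := σ) (p := p) y
  have hne : σ ^ 2 * y ^ (2 * p) * sDen μ σ p y ≠ 0 := by positivity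
  exact (continuousAt_const.div ((continuousAt_const.mul
    (Real.continuousAt_rpow_const y (2 * p) (Or.inl (ne_of_gt hy)))).mul
    (continuous_sDen hp1).continuousAt) hne).continuousWithinAt

lemma sDen_mul_mDen (hσ : σ ≠ 0) (hx : 0 < x) :
    sDen μ σ p x * mDen μ σ p x = 1 / (σ ^ 2 * x ^ (2 * p)) := by
  have := (Real.rpow_pos_of_pos hx (2 * p)).ne'
  have := (sDen_pos (μ := μ) (σ := σ) (p := p) x).ne'
  rw [mDen]
  field_simp

lemma mDen_le (hσ : σ ≠ 0) (hp1 : p < 1) (hx : x ∈ Ioc (0 : ℝ) 1) :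
    mDen μ σ p x ≤ scaleBound μ σ p / σ ^ 2 * x ^ (1 - 2 * p) / x := by
  have := Real.rpow_pos_of_pos hx.1 (2 * p)
  have := scaleBound_pos (μ := μ) (σ := σ) (p := p)
  have hx0 := hx.1.ne'
  calc mDen μ σ p x ≤ 1 / (σ ^ 2 * x ^ (2 * p) * (scaleBound μ σ p)⁻¹) :=
        one_div_le_one_div_of_le (by positivity)
          (by gcongr; exact inv_scaleBound_le_sDen hp1 (Ioc_subset_Icc_self hx))
    _ = scaleBound μ σ p / σ ^ 2 * x ^ (1 - 2 * p) / x := by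
        rw [Real.rpow_sub hx.1, Real.rpow_one]
        field_simp

lemma Sfun_mul_mDen_le (hσ : σ ≠ 0) (hp1 : p < 1) (hx : x ∈ Ioc (0 : ℝ) 1) :
    Sfun μ σ p x * mDen μ σ p x ≤ scaleBound μ σ p ^ 2 / σ ^ 2 * x ^ (1 - 2 * p) := by
  have := scaleBound_pos (μ := μ) (σ := σ) (p := p)
  have hx0 := hx.1.ne'
  calc Sfun μ σ p x * mDen μ σ p x
      ≤ scaleBound μ σ p * x * (scaleBound μ σ p / σ ^ 2 * x ^ (1 - 2 * p) / x) :=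
        mul_le_mul (Sfun_le hp1 (Ioc_subset_Icc_self hx)) (mDen_le hσ hp1 hx)
          (mDen_pos hσ hx.1).le (by positivity [hx.1])
    _ = scaleBound μ σ p ^ 2 / σ ^ 2 * x ^ (1 - 2 * p) := by
        field_simp

lemma intervalIntegrable_Sfun_mul_mDen (hσ : σ ≠ 0) (hp1 : p < 1) :
    IntervalIntegrable (fun y => Sfun μ σ p y * mDen μ σ p y) volume 0 1 := by
  refine ((intervalIntegral.intervalIntegrable_rpow' (r := 1 - 2 * p) (by linarith)).const_mul
    (scaleBound μ σ p ^ 2 / σ ^ 2)).mono_fun' ?_ ?_ <;> rw [uIoc_of_le zero_le_one]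
  · exact (((continuous_Sfun hp1).continuousOn.mul (continuousOn_mDen hσ hp1)).mono
      Ioc_subset_Ioi_self).aestronglyMeasurable measurableSet_Ioc
  · refine ae_restrict_of_forall_mem measurableSet_Ioc fun y hy => ?_
    dsimp only
    rw [Real.norm_of_nonneg (mul_nonneg (Sfun_nonneg hp1 hy.1.le) (mDen_pos hσ hy.1).le)]
    exact Sfun_mul_mDen_le hσ hp1 hy

noncomputable def greenUpper (μ σ p x : ℝ) : ℝ :=
  ∫ y in x..(1 : ℝ), (Sfun μ σ p 1 - Sfun μ σ p y) * mDen μ σ p y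

noncomputable def greenLower (μ σ p x : ℝ) : ℝ :=
  ∫ y in (0 : ℝ)..x, Sfun μ σ p y * mDen μ σ p y

noncomputable def psiDeriv (μ σ p x : ℝ) : ℝ :=
  2 * sDen μ σ p x / Sfun μ σ p 1 * (greenUpper μ σ p x - greenLower μ σ p x)

lemma continuousOn_greenUpper_integrand (hσ : σ ≠ 0) (hp1 : p < 1) :
    ContinuousOn (fun y => (Sfun μ σ p 1 - Sfun μ σ p y) * mDen μ σ p y) (Ioi 0) :=
  (continuousOn_const.sub (continuous_Sfun hp1).continuousOn).mul (continuousOn_mDen hσ hp1)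

lemma hasDerivAt_greenUpper (hσ : σ ≠ 0) (hp1 : p < 1) (hx : 0 < x) :
    HasDerivAt (greenUpper μ σ p) (-((Sfun μ σ p 1 - Sfun μ σ p x) * mDen μ σ p x)) x :=
  have hcont := continuousOn_greenUpper_integrand (μ := μ) hσ hp1
  intervalIntegral.integral_hasDerivAt_left (hcont.intervalIntegrable_of_Ioi hx one_pos)
    (hcont.stronglyMeasurableAtFilter isOpen_Ioi x hx) (hcont.continuousAt (Ioi_mem_nhds hx))

lemma hasDerivAt_greenLower (hσ : σ ≠ 0) (hp1 : p < 1) (hx : x ∈ Ioc (0 : ℝ) 1) :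
    HasDerivAt (greenLower μ σ p) (Sfun μ σ p x * mDen μ σ p x) x :=
  have hcont := (continuous_Sfun (μ := μ) (σ := σ) hp1).continuousOn.mul
    (continuousOn_mDen hσ hp1)
  intervalIntegral.integral_hasDerivAt_right
    ((intervalIntegrable_Sfun_mul_mDen hσ hp1).mono_set
      (by rw [uIcc_of_le hx.1.le, uIcc_of_le zero_le_one]; exact Icc_subset_Icc_right hx.2))
    (hcont.stronglyMeasurableAtFilter isOpen_Ioi x hx.1) (hcont.continuousAt (Ioi_mem_nhds hx.1))

lemma hasDerivAt_psiFun (hσ : σ ≠ 0) (hp1 : p < 1) (hx : x ∈ Ioo (0 : ℝ) 1) :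
    HasDerivAt (psiFun μ σ p) (psiDeriv μ σ p x) x :=
  hasDerivAt_green_combination (Sfun_pos hp1 one_pos).ne' (hasDerivAt_Sfun hp1 x)
    (hasDerivAt_greenUpper hσ hp1 hx.1) (hasDerivAt_greenLower hσ hp1 (Ioo_subset_Ioc_self hx))

lemma hasDerivAt_psiDeriv (hσ : σ ≠ 0) (hp1 : p < 1) (hx : x ∈ Ioo (0 : ℝ) 1) :
    HasDerivAt (psiDeriv μ σ p)
      (-(2 * μ / σ ^ 2) * x ^ (1 - 2 * p) * psiDeriv μ σ p x - 2 / (σ ^ 2 * x ^ (2 * p))) x := by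
  refine (hasDerivAt_green_combination_deriv (Sfun_pos hp1 one_pos).ne'
    (hasDerivAt_sDen hσ hp1 hx.1) (hasDerivAt_greenUpper hσ hp1 hx.1)
    (hasDerivAt_greenLower hσ hp1 (Ioo_subset_Ioc_self hx))).congr_deriv ?_
  rw [psiDeriv, mul_assoc 2 (sDen μ σ p x), sDen_mul_mDen hσ hx.1]
  ring

lemma hasDerivAt_deriv_psiFun (hσ : σ ≠ 0) (hp1 : p < 1) (hx : x ∈ Ioo (0 : ℝ) 1) :
    HasDerivAt (deriv (psiFun μ σ p))
      (-(2 * μ / σ ^ 2) * x ^ (1 - 2 * p) * psiDeriv μ σ p x - 2 / (σ ^ 2 * x ^ (2 * p))) x :=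
  (hasDerivAt_psiDeriv hσ hp1 hx).congr_of_eventuallyEq <|
    eventually_of_mem (isOpen_Ioo.mem_nhds hx) fun _ hy => (hasDerivAt_psiFun hσ hp1 hy).deriv

lemma psiFun_one (hp1 : p < 1) : psiFun μ σ p 1 = 0 := by
  rw [psiFun, intervalIntegral.integral_same, phiFun,
    div_self (Sfun_pos (μ := μ) (σ := σ) hp1 one_pos).ne']
  ring

lemma tendsto_phiFun_zero (hp1 : p < 1) : Tendsto (phiFun μ σ p) (𝓝[>] 0) (𝓝 0) := by
  have := ((continuous_Sfun (μ := μ) (σ := σ) hp1).div_const (Sfun μ σ p 1)).tendsto 0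
  rw [Sfun_zero, zero_div] at this
  exact this.mono_left nhdsWithin_le_nhds

lemma tendsto_greenLower_zero (hσ : σ ≠ 0) (hp1 : p < 1) :
    Tendsto (greenLower μ σ p) (𝓝[>] 0) (𝓝 0) := by
  have hint : IntegrableOn (fun y => Sfun μ σ p y * mDen μ σ p y) (Icc 0 1) :=
    (intervalIntegrable_iff_integrableOn_Icc_of_le zero_le_one enorm_ne_top).1
      (intervalIntegrable_Sfun_mul_mDen hσ hp1)
  rw [← uIcc_of_le zero_le_one] at hint
  have h := intervalIntegral.continuousOn_primitive_interval hint
  rw [uIcc_of_le zero_le_one] at h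
  have h0 := ((h 0 ⟨le_rfl, zero_le_one⟩).mono_of_mem_nhdsWithin (Icc_mem_nhdsGT one_pos)).tendsto
  rwa [intervalIntegral.integral_same] at h0

lemma greenUpper_nonneg (hσ : σ ≠ 0) (hp1 : p < 1) (hx : x ∈ Ioc (0 : ℝ) 1) :
    0 ≤ greenUpper μ σ p x :=
  intervalIntegral.integral_nonneg hx.2 fun _ hy => mul_nonneg
    (sub_nonneg.2 ((strictMono_Sfun hp1).monotone hy.2)) (mDen_pos hσ (hx.1.trans_le hy.1)).le

lemma greenUpper_le (hσ : σ ≠ 0) (hp : 1 / 2 ≤ p) (hp1 : p < 1) (hx : x ∈ Ioo (0 : ℝ) 1) :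
    greenUpper μ σ p x
      ≤ Sfun μ σ p 1 * (scaleBound μ σ p / σ ^ 2) * x ^ (1 - 2 * p) * -Real.log x := by
  have hS1 := Sfun_pos (μ := μ) (σ := σ) hp1 one_pos
  calc greenUpper μ σ p x
      ≤ ∫ y in x..(1 : ℝ), Sfun μ σ p 1 * (scaleBound μ σ p / σ ^ 2) * x ^ (1 - 2 * p) * y⁻¹ :=
        intervalIntegral.integral_mono_on hx.2.le
          ((continuousOn_greenUpper_integrand hσ hp1).intervalIntegrable_of_Ioi hx.1 one_pos)
          ((continuousOn_inv₀.mono fun _ hy => ne_of_gt hy).intervalIntegrable_of_Ioi hx.1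
            one_pos |>.const_mul _) fun y hy => ?_
    _ = Sfun μ σ p 1 * (scaleBound μ σ p / σ ^ 2) * x ^ (1 - 2 * p) * -Real.log x := by
        rw [intervalIntegral.integral_const_mul, integral_inv_of_pos hx.1 one_pos, one_div,
          Real.log_inv]
  have hy0 : 0 < y := hx.1.trans_le hy.1
  calc (Sfun μ σ p 1 - Sfun μ σ p y) * mDen μ σ p y
      ≤ Sfun μ σ p 1 * mDen μ σ p y :=
        mul_le_mul_of_nonneg_right (sub_le_self _ (Sfun_nonneg hp1 hy0.le)) (mDen_pos hσ hy0).le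
    _ ≤ Sfun μ σ p 1 * (scaleBound μ σ p / σ ^ 2 * y ^ (1 - 2 * p) / y) :=
        mul_le_mul_of_nonneg_left (mDen_le hσ hp1 ⟨hy0, hy.2⟩) hS1.le
    _ ≤ Sfun μ σ p 1 * (scaleBound μ σ p / σ ^ 2 * x ^ (1 - 2 * p) / y) := by
        have := scaleBound_pos (μ := μ) (σ := σ) (p := p)
        have := Real.rpow_le_rpow_of_nonpos hx.1 hy.1 (show 1 - 2 * p ≤ 0 by linarith)
        gcongr
    _ = Sfun μ σ p 1 * (scaleBound μ σ p / σ ^ 2) * x ^ (1 - 2 * p) * y⁻¹ := by ring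

lemma tendsto_phiFun_mul_greenUpper_zero (hσ : σ ≠ 0) (hp : 1 / 2 ≤ p) (hp1 : p < 1) :
    Tendsto (fun x => phiFun μ σ p x * greenUpper μ σ p x) (𝓝[>] 0) (𝓝 0) := by
  have hS1 := Sfun_pos (μ := μ) (σ := σ) hp1 one_pos
  have := scaleBound_pos (μ := μ) (σ := σ) (p := p)
  have hlim := (tendsto_log_mul_rpow_nhdsGT_zero (r := 2 - 2 * p) (by linarith)).neg.const_mul
    (scaleBound μ σ p ^ 2 / σ ^ 2)
  rw [neg_zero, mul_zero] at hlim
  refine squeeze_zero' ?_ ?_ hlim <;> filter_upwards [Ioo_mem_nhdsGT one_pos] with x hx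
  · exact mul_nonneg (div_nonneg (Sfun_nonneg hp1 hx.1.le) hS1.le)
      (greenUpper_nonneg hσ hp1 (Ioo_subset_Ioc_self hx))
  calc phiFun μ σ p x * greenUpper μ σ p x
      ≤ scaleBound μ σ p * x / Sfun μ σ p 1
          * (Sfun μ σ p 1 * (scaleBound μ σ p / σ ^ 2) * x ^ (1 - 2 * p) * -Real.log x) :=
        mul_le_mul (div_le_div_of_nonneg_right (Sfun_le hp1 (Ioo_subset_Icc_self hx)) hS1.le)
          (greenUpper_le hσ hp hp1 hx) (greenUpper_nonneg hσ hp1 (Ioo_subset_Ioc_self hx))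
          (by positivity [hx.1])
    _ = scaleBound μ σ p ^ 2 / σ ^ 2 * -(Real.log x * x ^ (2 - 2 * p)) := by
        rw [show 2 - 2 * p = 1 + (1 - 2 * p) by ring, Real.rpow_add hx.1, Real.rpow_one]
        field_simp

lemma tendsto_psiFun_zero (hσ : σ ≠ 0) (hp : 1 / 2 ≤ p) (hp1 : p < 1) :
    Tendsto (psiFun μ σ p) (𝓝[>] 0) (𝓝 0) := by
  have := ((tendsto_phiFun_mul_greenUpper_zero (μ := μ) hσ hp hp1).const_mul 2).add
    ((((tendsto_phiFun_zero (μ := μ) (σ := σ) hp1).const_sub 1).const_mul 2).mul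
      (tendsto_greenLower_zero (μ := μ) hσ hp1))
  rw [mul_zero, zero_add, mul_zero] at this
  refine this.congr fun x => ?_
  simp only [psiFun, greenUpper, greenLower]
  ring

end CEV

open CEV

open Filter Topology in
/-- `ψ` is twice differentiable on `(0,1)`, solves the degenerate ODE
`μ x ψ'(x) + (1/2) σ² x^{2p} ψ''(x) = −1` on `(0,1)`, and satisfies the boundary
conditions `ψ(1) = 0` and `lim_{x↓0} ψ(x) = 0`. -/
theorem stmt13 (μ σ p : ℝ) (hσ : 0 < σ) (hp : 1 / 2 ≤ p) (hp1 : p < 1) :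
    (∀ x ∈ Ioo (0 : ℝ) 1,
      DifferentiableAt ℝ (psiFun μ σ p) x ∧ DifferentiableAt ℝ (deriv (psiFun μ σ p)) x) ∧
    (∀ x ∈ Ioo (0 : ℝ) 1,
      μ * x * deriv (psiFun μ σ p) x
        + 1 / 2 * σ ^ 2 * x ^ (2 * p) * deriv (deriv (psiFun μ σ p)) x = -1) ∧
    psiFun μ σ p 1 = 0 ∧
    Tendsto (psiFun μ σ p) (𝓝[>] (0 : ℝ)) (𝓝 0) := by
  have hσ0 := hσ.ne'
  refine ⟨fun x hx => ⟨(hasDerivAt_psiFun hσ0 hp1 hx).differentiableAt,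
    (hasDerivAt_deriv_psiFun hσ0 hp1 hx).differentiableAt⟩, fun x hx => ?_, psiFun_one hp1,
    tendsto_psiFun_zero hσ0 hp hp1⟩
  rw [(hasDerivAt_psiFun hσ0 hp1 hx).deriv, (hasDerivAt_deriv_psiFun hσ0 hp1 hx).deriv]
  have := Real.rpow_pos_of_pos hx.1 (2 * p)
  have hx_eq : x ^ (2 * p) * x ^ (1 - 2 * p) = x := by
    rw [← Real.rpow_add hx.1, add_sub_cancel, Real.rpow_one]
  field_simp
  linear_combination (-μ * psiDeriv μ σ p x) * hx_eq
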